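/- arXiv:2312.02198 — 11 statements merged into one kernel-verified Lean document; each statement's English description precedes it below -/
import Mathlib

section
/- If f : ℝ → ℝ satisfies f(x - f(x) + f(y)) = f(y) for all x, y ∈ ℝ, the range of x ↦ x - f(x) equals [0,1), and f(0) = 0, then f(x) = ⌊x⌋ for all x ∈ ℝ. -/
/-!
Every value `s` of `f` is a fixed point, and the equation, read with `r = x - f x` ranging over
`[0, 1)`, says that `f` is constant equal to `s` on `[s, s + 1)`. Since `f x ∈ (x - 1, x]`, the
next fixed point after `s` is exactly `s + 1`, so starting from `f 0 = 0` the fixed points are the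
integers, and `f x = ⌊x⌋`.
-/

open Set

section FixedPoints

variable {f : ℝ → ℝ}

lemma apply_add_apply_of_Ico_subset_range (h : ∀ x y, f (x - f x + f y) = f y)
    (hrange : Ico 0 1 ⊆ range (fun x => x - f x)) {r : ℝ} (hr : r ∈ Ico 0 1) (y : ℝ) :
    f (r + f y) = f y := by
  obtain ⟨x, rfl⟩ := hrange hr
  exact h x y

lemma apply_eq_of_mem_Ico (hf : ∀ r ∈ Ico (0 : ℝ) 1, ∀ y, f (r + f y) = f y) {s x : ℝ}
    (hs : f s = s) (hx : x ∈ Ico s (s + 1)) : f x = s := by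
  have := hf (x - s) ⟨by linarith [hx.1], by linarith [hx.2]⟩ s
  rwa [hs, sub_add_cancel] at this

lemma apply_add_one_of_apply_eq (hf : ∀ r ∈ Ico (0 : ℝ) 1, ∀ y, f (r + f y) = f y)
    (hbound : ∀ x, x - f x ∈ Ico (0 : ℝ) 1) {z : ℝ} (hz : f z = z) : f (z + 1) = z + 1 := by
  set w := f (z + 1)
  have hw : f w = w := by simpa using hf 0 ⟨le_rfl, one_pos⟩ (z + 1)
  obtain ⟨hw_le, hw_gt⟩ := hbound (z + 1)
  by_contra hne
  have hw_lt : w < z + 1 := lt_of_le_of_ne (by linarith) hne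
  have : f w = z := apply_eq_of_mem_Ico hf hz ⟨by linarith, hw_lt⟩
  linarith

lemma apply_sub_one_of_apply_eq (hf : ∀ r ∈ Ico (0 : ℝ) 1, ∀ y, f (r + f y) = f y)
    (hbound : ∀ x, x - f x ∈ Ico (0 : ℝ) 1) {a : ℝ} (ha : f a = a) : f (a - 1) = a - 1 := by
  set z := f (a - 1)
  have hz : f z = z := by simpa using hf 0 ⟨le_rfl, one_pos⟩ (a - 1)
  obtain ⟨hz_le, hz_gt⟩ := hbound (a - 1)
  have : f a = z + 1 :=
    apply_eq_of_mem_Ico hf (apply_add_one_of_apply_eq hf hbound hz) ⟨by linarith, by linarith⟩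
  linarith

lemma apply_intCast (hf : ∀ r ∈ Ico (0 : ℝ) 1, ∀ y, f (r + f y) = f y)
    (hbound : ∀ x, x - f x ∈ Ico (0 : ℝ) 1) (h0 : f 0 = 0) (n : ℤ) : f n = n := by
  induction n using Int.induction_on with
  | zero => simpa using h0
  | succ k ih => exact_mod_cast apply_add_one_of_apply_eq hf hbound ih
  | pred k ih => exact_mod_cast apply_sub_one_of_apply_eq hf hbound ih

end FixedPoints

theorem floor_characterization (f : ℝ → ℝ)
    (h1 : ∀ x y : ℝ, f (x - f x + f y) = f y)
    (h2 : Set.range (fun x : ℝ => x - f x) = Set.Ico (0:ℝ) 1)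
    (h3 : f 0 = 0) :
    ∀ x : ℝ, f x = ⌊x⌋ := by
  have hf : ∀ r ∈ Ico (0 : ℝ) 1, ∀ y, f (r + f y) = f y :=
    fun r hr => apply_add_apply_of_Ico_subset_range h1 h2.ge hr
  have hbound : ∀ x, x - f x ∈ Ico (0 : ℝ) 1 := fun x => h2 ▸ mem_range_self x
  intro x
  exact apply_eq_of_mem_Ico hf (apply_intCast hf hbound h3 ⌊x⌋)
    ⟨Int.floor_le x, Int.lt_floor_add_one x⟩
end

section
/- A function f : ℝ → ℝ satisfies f(x - f(x) + f(y)) = f(y) for all x, y ∈ ℝ with range of x ↦ x - f(x) equal to [0,1) if and only if there exists a constant c ∈ ℝ such that f(x) = ⌊x - c⌋ + c for all x ∈ ℝ. -/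
/-!
Write `g x = x - f x`. Since every `t ∈ [0, 1)` is a value of `g`, the equation says that `f` is
constant equal to `f y` on `[f y, f y + 1)`; since `g` takes values in `[0, 1)`, each `x` lies in
the block `[f x, f x + 1)` of its own value. Comparing the blocks of `f x` and of `f x + 1` shows
that `f x + 1` is again a value, whence `f (x + 1) = f x + 1`: so `g` is `1`-periodic, and on the
block `[c, c + 1)` of `c = f 0` it equals `x - c`. Hence `g x = fract (x - c)`.
-/

open Set

namespace ShiftedFloor

variable {K : Type*} [Field K] [LinearOrder K]

theorem sub_floor_sub_add [FloorRing K] (c x : K) :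
    x - ((⌊x - c⌋ : K) + c) = Int.fract (x - c) := by
  rw [Int.fract]; ring

variable [IsStrictOrderedRing K]

section Necessity

variable {f : K → K} (hf : ∀ t ∈ Ico (0 : K) 1, ∀ y, f (t + f y) = f y)
include hf

theorem apply_eq_of_mem_Ico {p y : K} (hp : p ∈ Ico (f y) (f y + 1)) : f p = f y := by
  simpa using hf (p - f y) ⟨by linarith [hp.1], by linarith [hp.2]⟩ y

theorem apply_apply (y : K) : f (f y) = f y :=
  apply_eq_of_mem_Ico hf ⟨le_rfl, lt_add_one _⟩

theorem apply_add_one (hg : ∀ x, x - f x ∈ Ico (0 : K) 1) (x : K) : f (x + 1) = f x + 1 := by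
  set s := f x
  have hs1 : f (s + 1) = s + 1 := by
    obtain ⟨h0, h1⟩ := hg (s + 1)
    by_contra hne
    have hlt : f (s + 1) < s + 1 := lt_of_le_of_ne (by linarith) hne
    -- `f (s + 1)` would be a fixed point lying in the block of `s`, where `f` equals `s`
    have hblock : f (f (s + 1)) = s := apply_eq_of_mem_Ico hf ⟨by linarith, hlt⟩
    rw [apply_apply hf] at hblock
    linarith
  obtain ⟨h0, h1⟩ := hg x
  calc f (x + 1) = f (s + 1) := apply_eq_of_mem_Ico hf (by rw [hs1]; constructor <;> linarith)
    _ = s + 1 := hs1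

theorem periodic_sub_self (hg : ∀ x, x - f x ∈ Ico (0 : K) 1) :
    Function.Periodic (fun x => x - f x) 1 := fun x => by
  simp only [apply_add_one hf hg]; ring

end Necessity

variable [FloorRing K]

theorem eq_floor_add_of_periodic {f : K → K} (c : K)
    (hper : Function.Periodic (fun x => x - f x) 1) (hblock : ∀ x ∈ Ico c (c + 1), f x = c)
    (x : K) : f x = ⌊x - c⌋ + c := by
  have hmem : x - ⌊x - c⌋ * 1 ∈ Ico c (c + 1) := by
    constructor <;> linarith [Int.floor_le (x - c), Int.lt_floor_add_one (x - c)]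
  have := hper.sub_int_mul_eq ⌊x - c⌋ (x := x)
  simp only [hblock _ hmem] at this
  linarith

theorem floor_fract_add_intCast_add_sub (c x : K) (n : ℤ) : ⌊Int.fract x + (n + c) - c⌋ = n := by
  rw [← add_assoc, add_sub_cancel_right, Int.floor_add_intCast, Int.floor_fract, zero_add]

theorem range_fract_sub (c : K) : range (fun x => Int.fract (x - c)) = Ico 0 1 := by
  refine Subset.antisymm (range_subset_iff.2 fun x => ⟨Int.fract_nonneg _, Int.fract_lt_one _⟩) ?_
  intro r hr
  exact ⟨r + c, by simp only [add_sub_cancel_right, Int.fract_eq_self.2 hr]⟩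

end ShiftedFloor

open ShiftedFloor in
theorem decomposer_Ico_iff_shifted_floor (f : ℝ → ℝ) :
    ((∀ x y : ℝ, f (x - f x + f y) = f y) ∧
      Set.range (fun x : ℝ => x - f x) = Set.Ico (0:ℝ) 1) ↔
    ∃ c : ℝ, ∀ x : ℝ, f x = (⌊x - c⌋ : ℝ) + c := by
  constructor
  · rintro ⟨heq, hrange⟩
    have hg : ∀ x, x - f x ∈ Ico (0 : ℝ) 1 := fun x => hrange ▸ mem_range_self x
    have hf : ∀ t ∈ Ico (0 : ℝ) 1, ∀ y, f (t + f y) = f y := by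
      rintro t ht y
      obtain ⟨x, rfl⟩ := hrange ▸ ht
      exact heq x y
    refine ⟨f 0, eq_floor_add_of_periodic _ (periodic_sub_self hf hg) fun x hx => ?_⟩
    exact apply_eq_of_mem_Ico hf ((apply_apply hf 0).symm ▸ hx)
  · rintro ⟨c, hc⟩
    obtain rfl : f = fun x => (⌊x - c⌋ : ℝ) + c := funext hc
    refine ⟨fun x y => ?_, by simpa only [sub_floor_sub_add] using range_fract_sub c⟩
    simp only [sub_floor_sub_add, floor_fract_add_intCast_add_sub]
end

section
/- If f : ℝ → ℝ satisfies f(x - f(x) + f(y)) = f(y) for all x, y ∈ ℝ, the range of x ↦ x - f(x) equals (-1,0], and the range of f contains an integer, then f(x) = ⌈x⌉ for all x ∈ ℝ. -/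
/-! The functional equation says that every value `c = f y` is a fixed point of `f` and that `f`
is constant, equal to `c`, on `(c - 1, c]`; the range condition says that every `x` lies in such an
interval, namely the one of `c = f x`. So the intervals `(c - 1, c]` over the fixed points `c`
tile the line, which forces the fixed points to be spaced exactly `1` apart. Once one of them is an
integer, they are the integers and `f x = ⌈x⌉`. -/

open Function Set

section

variable {f : ℝ → ℝ}

lemma self_mem_Ioc_of_range_sub_eq (h2 : range (fun x => x - f x) = Ioc (-1 : ℝ) 0) (x : ℝ) :
    x ∈ Ioc (f x - 1) (f x) := by
  have : x - f x ∈ Ioc (-1 : ℝ) 0 := h2 ▸ mem_range_self x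
  exact ⟨by linarith [this.1], by linarith [this.2]⟩

lemma apply_eq_of_mem_Ioc (h1 : ∀ x y, f (x - f x + f y) = f y)
    (h2 : range (fun x => x - f x) = Ioc (-1 : ℝ) 0) (x y : ℝ) (hx : x ∈ Ioc (f y - 1) (f y)) :
    f x = f y := by
  obtain ⟨z, hz⟩ : x - f y ∈ range (fun z => z - f z) :=
    h2 ▸ ⟨by linarith [hx.1], by linarith [hx.2]⟩
  simpa [hz] using h1 z y

lemma isFixedPt_apply (hconst : ∀ x y, x ∈ Ioc (f y - 1) (f y) → f x = f y) (y : ℝ) :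
    IsFixedPt f (f y) :=
  hconst (f y) y ⟨sub_one_lt _, le_rfl⟩

lemma add_one_le_of_isFixedPt (hconst : ∀ x y, x ∈ Ioc (f y - 1) (f y) → f x = f y)
    {c d : ℝ} (hc : IsFixedPt f c) (hd : IsFixedPt f d) (hcd : c < d) : c + 1 ≤ d := by
  by_contra! hlt
  have : f c = f d := hconst c d ⟨by rw [hd]; linarith, by rw [hd]; exact hcd.le⟩
  rw [hc, hd] at this
  exact hcd.ne this

lemma isFixedPt_sub_one (hself : ∀ x, x ∈ Ioc (f x - 1) (f x))
    (hconst : ∀ x y, x ∈ Ioc (f y - 1) (f y) → f x = f y) {c : ℝ} (hc : IsFixedPt f c) :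
    IsFixedPt f (c - 1) := by
  obtain ⟨hd_lt, hd_ge⟩ := hself (c - 1)
  rcases hd_ge.eq_or_lt with heq | hd_gt
  · exact heq.symm
  · linarith [add_one_le_of_isFixedPt hconst (isFixedPt_apply hconst _) hc (by linarith)]

lemma isFixedPt_add_one (hself : ∀ x, x ∈ Ioc (f x - 1) (f x))
    (hconst : ∀ x y, x ∈ Ioc (f y - 1) (f y) → f x = f y) {c : ℝ} (hc : IsFixedPt f c) :
    IsFixedPt f (c + 1) := by
  set d := f (c + 1)
  obtain ⟨hd_lt, hd_ge⟩ := hself (c + 1)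
  rcases hd_ge.eq_or_lt with heq | hd_gt
  · exact heq.symm
  -- `d - 1` lies strictly between `c` and `c + 1`; its fixed point `e` is squeezed to `d - 1`.
  set e := f (d - 1)
  obtain ⟨he_lt, he_ge⟩ := hself (d - 1)
  have hd : IsFixedPt f d := isFixedPt_apply hconst _
  have he : IsFixedPt f e := isFixedPt_apply hconst _
  have hce := add_one_le_of_isFixedPt hconst hc he (by linarith)
  have hed := add_one_le_of_isFixedPt hconst he hd (by linarith)
  linarith

lemma isFixedPt_add_intCast (hself : ∀ x, x ∈ Ioc (f x - 1) (f x))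
    (hconst : ∀ x y, x ∈ Ioc (f y - 1) (f y) → f x = f y) {c : ℝ} (hc : IsFixedPt f c) (k : ℤ) :
    IsFixedPt f (c + k) := by
  induction k with
  | zero => simpa using hc
  | succ i ih =>
    simpa [add_assoc] using isFixedPt_add_one hself hconst ih
  | pred i ih =>
    simpa [sub_eq_add_neg, add_assoc] using isFixedPt_sub_one hself hconst ih

lemma eq_ceil_of_isFixedPt_intCast (hself : ∀ x, x ∈ Ioc (f x - 1) (f x))
    (hconst : ∀ x y, x ∈ Ioc (f y - 1) (f y) → f x = f y) {n : ℤ} (hn : IsFixedPt f n) (x : ℝ) :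
    f x = ⌈x⌉ := by
  have hceil : IsFixedPt f (⌈x⌉ : ℝ) := by
    simpa using isFixedPt_add_intCast hself hconst hn (⌈x⌉ - n)
  have hx : x ∈ Ioc (f ⌈x⌉ - 1) (f ⌈x⌉) := by
    rw [hceil]
    exact ⟨by linarith [Int.ceil_lt_add_one x], Int.le_ceil x⟩
  exact (hconst x _ hx).trans hceil

end

theorem ceil_characterization (f : ℝ → ℝ)
    (h1 : ∀ x y : ℝ, f (x - f x + f y) = f y)
    (h2 : Set.range (fun x : ℝ => x - f x) = Set.Ioc (-1:ℝ) 0)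
    (h3 : ∃ x : ℝ, ∃ n : ℤ, f x = n) :
    ∀ x : ℝ, f x = ⌈x⌉ := by
  have hself := self_mem_Ioc_of_range_sub_eq h2
  have hconst := apply_eq_of_mem_Ioc h1 h2
  obtain ⟨x₀, n, hn⟩ := h3
  exact eq_ceil_of_isFixedPt_intCast hself hconst (hn ▸ isFixedPt_apply hconst x₀)
end

section
/- A function f : ℝ → ℝ satisfies f(x - f(x) + f(y)) = f(y) for all x, y ∈ ℝ with range of x ↦ x - f(x) equal to (-1,0] if and only if there exists a constant c ∈ ℝ such that f(x) = ⌈x - c⌉ + c for all x ∈ ℝ. -/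
/-! Since `x - f x` ranges over `(-1, 0]`, the equation says that `f` is constant, equal to `p`,
on `(p - 1, p]` for every value `p` of `f`. So the values of `f` are its fixed points, distinct
fixed points lie at least `1` apart, and every `x` lies in the window of the fixed point `f x`.
This forces the fixed points to form a single coset `c + ℤ`, i.e. `f (x + 1) = f x + 1`, and then
`f x = ⌈x - c⌉ + c` with `c = f 0`. -/

open Set Function

namespace ShiftInvariant

variable {f : ℝ → ℝ}

section Shift

variable (hshift : ∀ t ∈ Ioc (-1 : ℝ) 0, ∀ y, f (t + f y) = f y)
include hshift

theorem isFixedPt_apply (y : ℝ) : IsFixedPt f (f y) := by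
  simpa [IsFixedPt] using hshift 0 ⟨by norm_num, le_rfl⟩ y

theorem apply_eq_of_mem_Ioc {p x : ℝ} (hp : IsFixedPt f p) (hx : x ∈ Ioc (p - 1) p) :
    f x = p := by
  have h := hshift (x - p) ⟨by linarith [hx.1], by linarith [hx.2]⟩ p
  rwa [hp, sub_add_cancel] at h

theorem add_one_le_of_isFixedPt {p q : ℝ} (hp : IsFixedPt f p) (hq : IsFixedPt f q)
    (hpq : p < q) : p + 1 ≤ q := by
  by_contra! h
  have : f p = q := apply_eq_of_mem_Ioc hshift hq ⟨by linarith, hpq.le⟩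
  exact hpq.ne (hp.symm.trans this)

end Shift

section Window

variable (hmem : ∀ x, x - f x ∈ Ioc (-1 : ℝ) 0)
  (hshift : ∀ t ∈ Ioc (-1 : ℝ) 0, ∀ y, f (t + f y) = f y)
include hmem hshift

/-- With `u = f (p + 1)`, the fixed points `f (u - 1) ∈ [u - 1, u)` and `u` force `u - 1` to be
fixed; it lies in `[p, p + 1)`, so it cannot be a fixed point other than `p`. -/
theorem isFixedPt_add_one {p : ℝ} (hp : IsFixedPt f p) : IsFixedPt f (p + 1) := by
  set u := f (p + 1)
  have hu : IsFixedPt f u := isFixedPt_apply hshift (p + 1)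
  have hu_mem := hmem (p + 1)
  have hw_mem := hmem (u - 1)
  have hw_le : f (u - 1) + 1 ≤ u :=
    add_one_le_of_isFixedPt hshift (isFixedPt_apply hshift _) hu (by linarith [hw_mem.1])
  have hu1 : IsFixedPt f (u - 1) := by
    show f (u - 1) = u - 1
    linarith [hw_mem.2]
  have hpu : u - 1 ≤ p := by
    by_contra! h
    linarith [add_one_le_of_isFixedPt hshift hp hu1 h, hu_mem.1]
  have hu_eq : u = p + 1 := by linarith [hu_mem.2]
  rw [IsFixedPt, ← hu_eq]
  exact hu

theorem apply_add_one (x : ℝ) : f (x + 1) = f x + 1 :=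
  apply_eq_of_mem_Ioc hshift (isFixedPt_add_one hmem hshift (isFixedPt_apply hshift x))
    ⟨by linarith [(hmem x).1], by linarith [(hmem x).2]⟩

theorem apply_eq_ceil_sub_add (x : ℝ) : f x = ⌈x - f 0⌉ + f 0 := by
  set n := ⌈x - f 0⌉
  have hper : Periodic (fun x => f x - x) 1 := fun x => by
    simp only [apply_add_one hmem hshift x]
    ring
  have hn : f (x - n) = f 0 := by
    have ht : x - n - f 0 ∈ Ioc (-1 : ℝ) 0 :=
      Int.ceil_eq_zero_iff.mp (by rw [sub_right_comm, Int.ceil_sub_intCast, sub_self])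
    simpa using hshift _ ht 0
  have hx := hper.sub_int_mul_eq n (x := x)
  simp only [mul_one, hn] at hx
  linarith

end Window

end ShiftInvariant

theorem sub_ceil_sub_add_mem_Ioc (c x : ℝ) : x - ((⌈x - c⌉ : ℝ) + c) ∈ Ioc (-1 : ℝ) 0 :=
  Int.ceil_eq_zero_iff.mp (by rw [sub_add_eq_sub_sub_swap, Int.ceil_sub_intCast, sub_self])

theorem ceil_add_ceil_sub_add {c t : ℝ} (ht : t ∈ Ioc (-1 : ℝ) 0) (y : ℝ) :
    ⌈t + ((⌈y - c⌉ : ℝ) + c) - c⌉ = ⌈y - c⌉ := by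
  rw [add_sub_assoc, add_sub_cancel_right, Int.ceil_add_intCast, Int.ceil_eq_zero_iff.mpr ht, zero_add]

theorem decomposer_Ioc_iff_shifted_ceil (f : ℝ → ℝ) :
    ((∀ x y : ℝ, f (x - f x + f y) = f y) ∧
      Set.range (fun x : ℝ => x - f x) = Set.Ioc (-1:ℝ) 0) ↔
    ∃ c : ℝ, ∀ x : ℝ, f x = (⌈x - c⌉ : ℝ) + c := by
  constructor
  · rintro ⟨hfe, hrange⟩
    have hmem : ∀ x, x - f x ∈ Ioc (-1 : ℝ) 0 := fun x => hrange ▸ mem_range_self x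
    have hshift : ∀ t ∈ Ioc (-1 : ℝ) 0, ∀ y, f (t + f y) = f y := by
      rw [← hrange]
      rintro _ ⟨x, rfl⟩ y
      exact hfe x y
    exact ⟨f 0, ShiftInvariant.apply_eq_ceil_sub_add hmem hshift⟩
  · rintro ⟨c, hf⟩
    obtain rfl : f = fun x => (⌈x - c⌉ : ℝ) + c := funext hf
    refine ⟨fun x y => ?_, ?_⟩
    · simp only [ceil_add_ceil_sub_add (sub_ceil_sub_add_mem_Ioc c x)]
    · refine (range_subset_iff.mpr (sub_ceil_sub_add_mem_Ioc c)).antisymm fun t ht => ⟨t + c, ?_⟩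
      simp only [add_sub_cancel_right, Int.ceil_eq_zero_iff.mpr ht, Int.cast_zero, zero_add]
end

section
/- If f : ℝ → ℝ satisfies f(x - f(x) + f(y)) = f(y) for all x, y ∈ ℝ, the range of f equals [0,1), and the range of x ↦ x - f(x) contains an integer, then f(x) = x - ⌊x⌋ (the fractional part) for all x ∈ ℝ. -/
/-!
Let `S = shifts f` be the set of values `x - f x` (for `f = Int.fract` it is `ℤ`). The equation
says `f (s + t) = t` for `s ∈ S` and every value `t` of `f`, i.e. for all `t ∈ [0,1)`; hence two
points of `S` at distance `< 1` coincide, and `x - f x` is the unique point of `S` in `(x - 1, x]`.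
This forces `S` to be closed under `± 1`, so an integer in `S` puts all of `ℤ` in `S`; then
`x - f x` and `⌊x⌋` are both the point of `S` in `(x - 1, x]`.
-/

open Set

namespace FractCharacterization

def shifts (f : ℝ → ℝ) : Set ℝ := range fun x => x - f x

variable {f : ℝ → ℝ}

lemma sub_mem_shifts (x : ℝ) : x - f x ∈ shifts f := ⟨x, rfl⟩

lemma apply_add_of_mem_shifts (hf : ∀ x y, f (x - f x + f y) = f y)
    (hsurj : Ico 0 1 ⊆ range f) {s t : ℝ} (hs : s ∈ shifts f) (ht : t ∈ Ico 0 1) :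
    f (s + t) = t := by
  obtain ⟨x, rfl⟩ := hs
  obtain ⟨y, rfl⟩ := hsurj ht
  exact hf x y

lemma eq_of_mem_shifts_of_le_of_lt (hf : ∀ x y, f (x - f x + f y) = f y)
    (hsurj : Ico 0 1 ⊆ range f) {s s' : ℝ} (hs : s ∈ shifts f) (hs' : s' ∈ shifts f)
    (hle : s ≤ s') (hlt : s' < s + 1) : s = s' := by
  have h₀ : f s' = 0 := by
    simpa using apply_add_of_mem_shifts hf hsurj hs' (t := 0) ⟨le_rfl, one_pos⟩
  have h₁ : f s' = s' - s := by
    simpa using apply_add_of_mem_shifts hf hsurj hs (t := s' - s) ⟨by linarith, by linarith⟩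
  linarith

lemma eq_of_mem_shifts_of_abs_sub_lt_one (hf : ∀ x y, f (x - f x + f y) = f y)
    (hsurj : Ico 0 1 ⊆ range f) {s s' : ℝ} (hs : s ∈ shifts f) (hs' : s' ∈ shifts f)
    (hss' : |s - s'| < 1) : s = s' := by
  rw [abs_sub_lt_iff] at hss'
  rcases le_total s s' with h | h
  · exact eq_of_mem_shifts_of_le_of_lt hf hsurj hs hs' h (by linarith)
  · exact (eq_of_mem_shifts_of_le_of_lt hf hsurj hs' hs h (by linarith)).symm

lemma eq_sub_of_mem_shifts (hf : ∀ x y, f (x - f x + f y) = f y)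
    (hsurj : Ico 0 1 ⊆ range f) (hmaps : ∀ x, f x ∈ Ico 0 1) {s x : ℝ}
    (hs : s ∈ shifts f) (hsx : s ≤ x) (hxs : x < s + 1) : s = x - f x := by
  obtain ⟨h₀, h₁⟩ := hmaps x
  exact eq_of_mem_shifts_of_abs_sub_lt_one hf hsurj hs (sub_mem_shifts x)
    (abs_sub_lt_iff.2 ⟨by linarith, by linarith⟩)

lemma add_one_mem_shifts (hf : ∀ x y, f (x - f x + f y) = f y)
    (hsurj : Ico 0 1 ⊆ range f) (hmaps : ∀ x, f x ∈ Ico 0 1) {s : ℝ} (hs : s ∈ shifts f) :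
    s + 1 ∈ shifts f := by
  obtain ⟨h₀, h₁⟩ := hmaps (s + 1)
  rcases h₀.eq_or_lt with h | h
  · simpa [← h] using sub_mem_shifts (f := f) (s + 1)
  · have := eq_of_mem_shifts_of_abs_sub_lt_one hf hsurj hs (sub_mem_shifts (s + 1))
      (abs_sub_lt_iff.2 ⟨by linarith, by linarith⟩)
    linarith

lemma sub_one_mem_shifts (hf : ∀ x y, f (x - f x + f y) = f y)
    (hsurj : Ico 0 1 ⊆ range f) (hmaps : ∀ x, f x ∈ Ico 0 1) {s : ℝ} (hs : s ∈ shifts f) :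
    s - 1 ∈ shifts f := by
  obtain ⟨h₀, h₁⟩ := hmaps (s - 1)
  -- the point `s' ∈ S` in `(s - 2, s - 1]` has `s' + 1 ∈ S` within distance `1` of `s`
  have hs' := sub_mem_shifts (f := f) (s - 1)
  have := eq_of_mem_shifts_of_abs_sub_lt_one hf hsurj hs (add_one_mem_shifts hf hsurj hmaps hs')
    (abs_sub_lt_iff.2 ⟨by linarith, by linarith⟩)
  rwa [this, add_sub_cancel_right]

lemma intCast_mem_shifts (hf : ∀ x y, f (x - f x + f y) = f y)
    (hsurj : Ico 0 1 ⊆ range f) (hmaps : ∀ x, f x ∈ Ico 0 1) {n : ℤ} (hn : (n : ℝ) ∈ shifts f)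
    (m : ℤ) : (m : ℝ) ∈ shifts f := by
  induction m using Int.inductionOn' (b := n) with
  | zero => exact hn
  | succ k _ hk => exact_mod_cast add_one_mem_shifts hf hsurj hmaps hk
  | pred k _ hk => exact_mod_cast sub_one_mem_shifts hf hsurj hmaps hk

end FractCharacterization

open FractCharacterization in
theorem fract_characterization (f : ℝ → ℝ)
    (h1 : ∀ x y : ℝ, f (x - f x + f y) = f y)
    (h2 : Set.range f = Set.Ico (0:ℝ) 1)
    (h3 : ∃ x : ℝ, ∃ n : ℤ, x - f x = n) :
    ∀ x : ℝ, f x = x - ⌊x⌋ := by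
  have hsurj : Ico 0 1 ⊆ range f := h2.ge
  have hmaps : ∀ x, f x ∈ Ico 0 1 := fun x => h2 ▸ mem_range_self x
  obtain ⟨x₀, n, hn⟩ := h3
  intro x
  have hfloor : (⌊x⌋ : ℝ) = x - f x :=
    eq_sub_of_mem_shifts h1 hsurj hmaps (intCast_mem_shifts h1 hsurj hmaps ⟨x₀, hn⟩ ⌊x⌋)
      (Int.floor_le x) (Int.lt_floor_add_one x)
  linarith
end

section
/- A function f : ℝ → ℝ satisfies f(x - f(x) + f(y)) = f(y) for all x, y ∈ ℝ with range of f equal to [0,1) if and only if there exists a constant c ∈ ℝ such that f(x) = {x - c} for all x ∈ ℝ, where {t} denotes the fractional part of t. -/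
/-!
Call `a` an origin of `f` if `f (a + t) = t` for all `t ∈ [0,1)`. Since every value in `[0,1)` is
some `f y`, the functional equation says that every `x - f x` is an origin. Two origins `a ≤ b`
less than `1` apart coincide, since `f b` is `0` by `b` and `b - a` by `a`. As
`x - f x ∈ (x - 1, x]`, the origin `(a + 1) - f (a + 1)` lies in `(a, a + 1]` for any origin `a`,
so it is `a + 1`. Origins are therefore closed under `+ 1`, which makes `f` `1`-periodic, and a
`1`-periodic function with an origin `c` is `x ↦ {x - c}`.
-/

open Set Function

def IsFractOrigin (f : ℝ → ℝ) (a : ℝ) : Prop :=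
  ∀ t ∈ Ico (0 : ℝ) 1, f (a + t) = t

section FractOrigin

variable {f : ℝ → ℝ}

theorem IsFractOrigin.eq_of_le_of_lt_add_one {a b : ℝ} (ha : IsFractOrigin f a)
    (hb : IsFractOrigin f b) (hab : a ≤ b) (hba : b < a + 1) : a = b := by
  have h₁ : f b = b - a := by
    simpa using ha (b - a) ⟨by linarith, by linarith⟩
  have h₂ : f b = 0 := by
    simpa using hb 0 ⟨le_rfl, one_pos⟩
  linarith

theorem isFractOrigin_sub_self (hfe : ∀ x y, f (x - f x + f y) = f y)
    (hsurj : Ico (0 : ℝ) 1 ⊆ range f) (x : ℝ) : IsFractOrigin f (x - f x) := by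
  intro t ht
  obtain ⟨y, rfl⟩ := hsurj ht
  exact hfe x y

theorem IsFractOrigin.add_one (hfe : ∀ x y, f (x - f x + f y) = f y)
    (hmaps : range f ⊆ Ico (0 : ℝ) 1) (hsurj : Ico (0 : ℝ) 1 ⊆ range f) {a : ℝ}
    (ha : IsFractOrigin f a) : IsFractOrigin f (a + 1) := by
  have hb := isFractOrigin_sub_self hfe hsurj (a + 1)
  obtain ⟨h₀, h₁⟩ := hmaps (mem_range_self (a + 1))
  rcases (sub_le_self _ h₀).eq_or_lt with heq | hlt
  · rwa [heq] at hb
  · exact absurd (ha.eq_of_le_of_lt_add_one hb (by linarith) hlt) (by linarith)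

theorem periodic_one_of_functional_equation (hfe : ∀ x y, f (x - f x + f y) = f y)
    (hmaps : range f ⊆ Ico (0 : ℝ) 1) (hsurj : Ico (0 : ℝ) 1 ⊆ range f) : Periodic f 1 := by
  intro x
  have hx := hmaps (mem_range_self x)
  have h := (isFractOrigin_sub_self hfe hsurj x).add_one hfe hmaps hsurj (f x) hx
  rwa [show x - f x + 1 + f x = x + 1 by ring] at h

end FractOrigin

theorem Function.Periodic.eq_fract_sub {f : ℝ → ℝ} (hf : Periodic f 1) {c : ℝ}
    (hc : IsFractOrigin f c) (x : ℝ) : f x = Int.fract (x - c) := by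
  have h := hc (Int.fract (x - c)) ⟨Int.fract_nonneg _, Int.fract_lt_one _⟩
  rwa [show c + Int.fract (x - c) = x - ⌊x - c⌋ * 1 by rw [Int.fract]; ring,
    hf.sub_int_mul_eq] at h

theorem fract_sub_fract_add_fract (x y c : ℝ) :
    Int.fract (x - Int.fract (x - c) + Int.fract (y - c) - c) = Int.fract (y - c) := by
  rw [show x - Int.fract (x - c) + Int.fract (y - c) - c = ⌊x - c⌋ + Int.fract (y - c) by
    rw [Int.fract]; ring, Int.fract_intCast_add, Int.fract_fract]

theorem range_fract_sub (c : ℝ) : range (fun x : ℝ ↦ Int.fract (x - c)) = Ico 0 1 := by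
  refine Subset.antisymm ?_ fun t ht ↦ ⟨t + c, by simpa using Int.fract_eq_self.2 ht⟩
  rintro _ ⟨x, rfl⟩
  exact ⟨Int.fract_nonneg _, Int.fract_lt_one _⟩

theorem decomposer_range_Ico_iff_shifted_fract (f : ℝ → ℝ) :
    ((∀ x y : ℝ, f (x - f x + f y) = f y) ∧
      Set.range f = Set.Ico (0:ℝ) 1) ↔
    ∃ c : ℝ, ∀ x : ℝ, f x = Int.fract (x - c) := by
  constructor
  · rintro ⟨hfe, hrange⟩
    have hc : IsFractOrigin f (-f 0) := by
      simpa using isFractOrigin_sub_self hfe hrange.ge 0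
    exact ⟨-f 0, (periodic_one_of_functional_equation hfe hrange.le hrange.ge).eq_fract_sub hc⟩
  · rintro ⟨c, hf⟩
    obtain rfl : f = fun x ↦ Int.fract (x - c) := funext hf
    exact ⟨fun x y ↦ fract_sub_fract_add_fract x y c, range_fract_sub c⟩
end

section
/- A function f : ℝ → ℝ satisfies f(x - f(x) + f(y)) = f(y) for all x, y ∈ ℝ with range of x ↦ x - f(x) equal to [-f(0), -f(0)+1) if and only if there exists a constant c ∈ ℝ such that f(x) = ⌊x⌋ + c for all x ∈ ℝ. -/
/-!
Put `a x = f x - f 0`. The range condition says `x ∈ [a x, a x + 1)`, and by the functional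
equation `f` takes the value `f x` on all of `[a x, a x + 1)`; so these intervals partition `ℝ`,
with `0` the left end of one of them. The left ends are then exactly the integers, and `a = ⌊·⌋`.
-/

structure IsUnitPartition (a : ℝ → ℝ) : Prop where
  mem : ∀ x, x ∈ Set.Ico (a x) (a x + 1)
  eq_of_mem : ∀ x t, t ∈ Set.Ico (a x) (a x + 1) → a t = a x

namespace IsUnitPartition

variable {a : ℝ → ℝ}

theorem apply_apply (ha : IsUnitPartition a) (x : ℝ) : a (a x) = a x :=
  ha.eq_of_mem x (a x) ⟨le_rfl, lt_add_one _⟩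

theorem eq_of_fixed (ha : IsUnitPartition a) {s u : ℝ} (hs : a s = s) (hu : a u = u)
    (hsu : s ≤ u) (hus : u < s + 1) : u = s := by
  have hmem : u ∈ Set.Ico (a s) (a s + 1) := by rw [hs]; exact ⟨hsu, hus⟩
  rw [← hu, ha.eq_of_mem s u hmem, hs]

theorem fixed_add_one (ha : IsUnitPartition a) {s : ℝ} (hs : a s = s) :
    a (s + 1) = s + 1 := by
  obtain ⟨hle, hgt⟩ := ha.mem (s + 1)
  rcases hle.lt_or_eq with hlt | heq
  · have := ha.eq_of_fixed hs (ha.apply_apply (s + 1)) (by linarith) hlt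
    linarith
  · exact heq

theorem fixed_sub_one (ha : IsUnitPartition a) {s : ℝ} (hs : a s = s) :
    a (s - 1) = s - 1 := by
  obtain ⟨hle, hgt⟩ := ha.mem (s - 1)
  -- `a (s - 1) + 1` is a fixed point in `(s - 1, s]`, too close to `s` to differ from it
  have := ha.eq_of_fixed (ha.fixed_add_one (ha.apply_apply (s - 1))) hs (by linarith)
    (by linarith)
  linarith

theorem apply_intCast (ha : IsUnitPartition a) (h0 : a 0 = 0) (n : ℤ) : a n = n := by
  induction n using Int.induction_on with
  | zero => simpa using h0
  | succ n ih => push_cast; exact ha.fixed_add_one ih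
  | pred n ih => push_cast at ih ⊢; exact ha.fixed_sub_one ih

theorem eq_floor (ha : IsUnitPartition a) (h0 : a 0 = 0) (x : ℝ) : a x = ⌊x⌋ := by
  have hfix := ha.apply_intCast h0 ⌊x⌋
  have hx : x ∈ Set.Ico (a ⌊x⌋) (a ⌊x⌋ + 1) := by
    rw [hfix]
    exact ⟨Int.floor_le x, Int.lt_floor_add_one x⟩
  rw [ha.eq_of_mem _ x hx, hfix]

end IsUnitPartition

theorem isUnitPartition_sub_apply_zero {f : ℝ → ℝ} (hfe : ∀ x y, f (x - f x + f y) = f y)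
    (hrange : Set.range (fun x => x - f x) = Set.Ico (-(f 0)) (-(f 0) + 1)) :
    IsUnitPartition (fun x => f x - f 0) where
  mem x := by
    have hx : x - f x ∈ Set.Ico (-(f 0)) (-(f 0) + 1) := hrange ▸ ⟨x, rfl⟩
    exact ⟨by linarith [hx.1], by linarith [hx.2]⟩
  eq_of_mem x t ht := by
    have hz : t - f x ∈ Set.range (fun x => x - f x) :=
      hrange ▸ ⟨by linarith [ht.1], by linarith [ht.2]⟩
    obtain ⟨z, hz⟩ := hz
    rw [show t = z - f z + f x by linarith, hfe]

theorem range_sub_floor_add_const (c : ℝ) :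
    Set.range (fun x : ℝ => x - (⌊x⌋ + c)) = Set.Ico (-c) (-c + 1) := by
  ext u
  constructor
  · rintro ⟨x, rfl⟩
    exact ⟨by linarith [Int.floor_le x], by linarith [Int.lt_floor_add_one x]⟩
  · rintro ⟨hu₁, hu₂⟩
    have h : ⌊u + c⌋ = 0 := Int.floor_eq_zero_iff.mpr ⟨by linarith, by linarith⟩
    exact ⟨u + c, by simp [h]⟩

theorem decomposer_shifted_Ico_iff_floor_add_const (f : ℝ → ℝ) :
    ((∀ x y : ℝ, f (x - f x + f y) = f y) ∧
      Set.range (fun x : ℝ => x - f x) = Set.Ico (-(f 0)) (-(f 0) + 1)) ↔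
    ∃ c : ℝ, ∀ x : ℝ, f x = (⌊x⌋ : ℝ) + c := by
  constructor
  · rintro ⟨hfe, hrange⟩
    refine ⟨f 0, fun x => ?_⟩
    have := (isUnitPartition_sub_apply_zero hfe hrange).eq_floor (sub_self _) x
    linarith
  · rintro ⟨c, hf⟩
    obtain rfl : f = fun x => (⌊x⌋ : ℝ) + c := funext hf
    refine ⟨fun x y => ?_, by simpa using range_sub_floor_add_const c⟩
    have harg : x - (⌊x⌋ + c) + (⌊y⌋ + c) = Int.fract x + ⌊y⌋ := by rw [Int.fract]; ring
    simp [harg]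
end

section
/- If f : ℝ → ℝ satisfies f(f(x) + y) = f(x + y) for all x, y ∈ ℝ and the range of x ↦ x - f(x) is ℤ, then f(x + 1) = f(x) for all x ∈ ℝ; conversely, if f(x+1) = f(x) for all x and x - f(x) ∈ ℤ for all x, then f(f(x)+y) = f(x+y) for all x, y. -/
theorem canceler_int_star_range_iff_periodic (f : ℝ → ℝ) :
    ((∀ x y : ℝ, f (f x + y) = f (x + y)) ∧
        Set.range (fun x : ℝ => x - f x) = {x : ℝ | ∃ n : ℤ, x = n} →
      ∀ x : ℝ, f (x + 1) = f x) ∧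
    ((∀ x : ℝ, f (x + 1) = f x) ∧ (∀ x : ℝ, ∃ n : ℤ, x - f x = n) →
      ∀ x y : ℝ, f (f x + y) = f (x + y)) := by
  constructor
  · rintro ⟨hc, hr⟩ x
    have h1 : (1 : ℝ) ∈ Set.range (fun x : ℝ => x - f x) := by
      rw [hr]; exact ⟨1, by norm_num⟩
    obtain ⟨x₀, hx₀⟩ := h1
    simp only at hx₀
    have hf : f x₀ = x₀ - 1 := by linarith
    have := hc x₀ (x - x₀ + 1)
    rw [hf] at this
    have e1 : x₀ - 1 + (x - x₀ + 1) = x := by ring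
    have e2 : x₀ + (x - x₀ + 1) = x + 1 := by ring
    rw [e1, e2] at this
    exact this.symm
  · rintro ⟨hp, hi⟩ x y
    have hper : Function.Periodic f 1 := hp
    obtain ⟨n, hn⟩ := hi x
    have hf : f x = x - n := by linarith
    rw [hf]
    have := hper.sub_int_mul_eq (x := x + y) n
    rw [mul_one] at this
    rw [← this]
    ring_nf
end

section
/- Let f : ℝ → ℝ be a decomposer function (i.e., f(x - f(x) + f(y)) = f(y) for all x, y ∈ ℝ) and let a, b, c ∈ ℝ with b ≠ 0. Then the function g(x) := b·f(x/b + a) + c is also a decomposer function, and so is x ↦ x - b·f(x/b + a) + c; in particular x ↦ x - f(x), x ↦ -f(-x), x ↦ f(x + a), x ↦ f(x) + c, and x ↦ b·f(x/b) are decomposer functions. -/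
/-- A decomposer function. -/
def IsDec (f : ℝ → ℝ) : Prop := ∀ x y : ℝ, f (x - f x + f y) = f y

lemma dec_affine {f : ℝ → ℝ} (hf : IsDec f) (a b c : ℝ) (hb : b ≠ 0) :
    IsDec (fun x => b * f (x / b + a) + c) := by
  intro x y
  simp only
  have h : (x - (b * f (x / b + a) + c) + (b * f (y / b + a) + c)) / b + a
      = (x / b + a) - f (x / b + a) + f (y / b + a) := by
    field_simp
    ring
  rw [h, hf]

lemma dec_sub {f : ℝ → ℝ} (hf : IsDec f) : IsDec (fun x => x - f x) := by
  intro x y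
  simp only
  have h1 : x - (x - f x) + (y - f y) = y - f y + f x := by ring
  rw [h1, hf]
  ring

theorem decomposer_transformations (f : ℝ → ℝ)
    (hf : ∀ x y : ℝ, f (x - f x + f y) = f y) (a b c : ℝ) (hb : b ≠ 0) :
    (∀ x y : ℝ, (fun x => b * f (x / b + a) + c) (x - (fun x => b * f (x / b + a) + c) x +
        (fun x => b * f (x / b + a) + c) y) = (fun x => b * f (x / b + a) + c) y) ∧
    (∀ x y : ℝ, (fun x => x - b * f (x / b + a) + c) (x - (fun x => x - b * f (x / b + a) + c) x +
        (fun x => x - b * f (x / b + a) + c) y) = (fun x => x - b * f (x / b + a) + c) y) ∧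
    (∀ x y : ℝ, (fun x => x - f x) (x - (fun x => x - f x) x + (fun x => x - f x) y)
        = (fun x => x - f x) y) ∧
    (∀ x y : ℝ, (fun x => -f (-x)) (x - (fun x => -f (-x)) x + (fun x => -f (-x)) y)
        = (fun x => -f (-x)) y) ∧
    (∀ x y : ℝ, (fun x => f (x + a)) (x - (fun x => f (x + a)) x + (fun x => f (x + a)) y)
        = (fun x => f (x + a)) y) ∧
    (∀ x y : ℝ, (fun x => f x + c) (x - (fun x => f x + c) x + (fun x => f x + c) y)
        = (fun x => f x + c) y) ∧
    (∀ x y : ℝ, (fun x => b * f (x / b)) (x - (fun x => b * f (x / b)) x +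
        (fun x => b * f (x / b)) y) = (fun x => b * f (x / b)) y) := by
  have hd : IsDec f := hf
  refine ⟨dec_affine hd a b c hb, ?_, dec_sub hd, ?_, ?_, ?_, ?_⟩
  · -- x - b f(x/b+a) + c = (x - (b f(x/b+a) - c))
    have h := dec_sub (dec_affine hd a b (-c) hb)
    intro x y
    have e : ∀ z : ℝ, z - b * f (z / b + a) + c = z - (b * f (z / b + a) + -c) := by
      intro z; ring
    simp only [e]
    exact h x y
  · intro x y
    simp only
    have e : x - -f (-x) + -f (-y) = -(-x - f (-x) + f (-y)) := by ring
    rw [e, neg_neg, hf]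
  · have h := dec_affine hd a 1 0 one_ne_zero
    intro x y
    simpa using h x y
  · have h := dec_affine hd 0 1 c one_ne_zero
    intro x y
    simpa using h x y
  · have h := dec_affine hd 0 b 0 hb
    intro x y
    simpa using h x y
end

section
/- There is no subset A ⊆ ℝ such that every real number has a unique representation a + r with a ∈ A and r ∈ [0,1] (the closed interval), i.e., [0,1] is not a factor of the additive group ℝ. -/
theorem Icc_not_factor :
    ¬ ∃ A : Set ℝ, ∀ x : ℝ,
      ∃! p : ℝ × ℝ, p.1 ∈ A ∧ p.2 ∈ Set.Icc (0:ℝ) 1 ∧ x = p.1 + p.2 := by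
  rintro ⟨A, hA⟩
  -- no two elements of A are within distance 1
  have gap : ∀ a ∈ A, ∀ b ∈ A, a < b → b ≤ a + 1 → False := by
    intro a ha b hb hab hb1
    obtain ⟨p, _, hu⟩ := hA b
    have h1 := hu (b, 0) ⟨hb, ⟨le_refl 0, zero_le_one⟩, by ring⟩
    have h2 := hu (a, b - a) ⟨ha, ⟨show (0:ℝ) ≤ b - a by linarith, show b - a ≤ 1 by linarith⟩, by ring⟩
    have h3 : (b, (0:ℝ)) = (a, b - a) := h1.trans h2.symm
    have := congrArg Prod.fst h3
    simp only at this
    linarith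
  obtain ⟨⟨a, r⟩, ⟨ha, hr, h0⟩, -⟩ := hA 0
  obtain ⟨⟨c, t⟩, ⟨hc, ht, hct⟩, -⟩ := hA (a + 3/2)
  simp only at hct ht
  obtain ⟨ht0, ht1⟩ := ht
  have hca : a + 1/2 ≤ c := by linarith
  have hc1 : a + 1 < c := by
    by_contra h
    push_neg at h
    exact gap a ha c hc (by linarith) h
  have hc2 : c ≤ a + 3/2 := by linarith
  obtain ⟨⟨e, u⟩, ⟨he, hu, heu⟩, -⟩ := hA ((a + 1 + c) / 2)
  simp only at heu hu
  obtain ⟨hu0, hu1⟩ := hu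
  have he1 : a + 1 < e := by
    by_contra h
    push_neg at h
    exact gap a ha e he (by linarith) h
  have hec : e < c := by linarith
  exact gap e he c hc hec (by linarith)
end

section
/- There is no subset A ⊆ ℝ such that every real number has a unique representation a + r with a ∈ A and r ∈ (0,1) (the open interval), i.e., (0,1) is not a factor of the additive group ℝ. -/
theorem Ioo_not_factor :
    ¬ ∃ A : Set ℝ, ∀ x : ℝ,
      ∃! p : ℝ × ℝ, p.1 ∈ A ∧ p.2 ∈ Set.Ioo (0:ℝ) 1 ∧ x = p.1 + p.2 := by
  rintro ⟨A, h⟩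
  obtain ⟨p, ⟨hpA, _, _⟩, _⟩ := h 0
  set a := p.1 with ha
  obtain ⟨q, ⟨hqA, ⟨hq0, hq1⟩, hq⟩, _⟩ := h (a + 1)
  set a' := q.1 with ha'
  have haa' : a < a' := by nlinarith [hq]
  have ha'1 : a' < a + 1 := by nlinarith [hq]
  set y : ℝ := (a' + (a + 1)) / 2 with hy
  have h1 : a' < y := by rw [hy]; linarith
  have h2 : y < a + 1 := by rw [hy]; linarith
  obtain ⟨r, _, hr⟩ := h y
  have e1 : (a, y - a) = r := hr (a, y - a) ⟨hpA, ⟨show (0:ℝ) < y - a by linarith, show y - a < 1 by linarith⟩, by ring⟩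
  have e2 : (a', y - a') = r := hr (a', y - a') ⟨hqA, ⟨show (0:ℝ) < y - a' by linarith, show y - a' < 1 by nlinarith [hq]⟩, by ring⟩
  have e3 := e1.trans e2.symm
  rw [Prod.ext_iff] at e3
  have : a = a' := e3.1
  linarith
end
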